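/- arXiv:2207.09987 — 3 statements merged into one kernel-verified Lean document; each statement's English description precedes it below -/
import Mathlib

section
/- Let p_0 ∈ (0,1) and let k, ℓ ≥ 1 be relatively prime integers with p_0 k > (1-p_0) ℓ. Then the polynomial equation p_0 z^{k+ℓ} - z^ℓ + (1 - p_0) = 0 has a unique real solution ν_1 in the open interval (0,1). -/
/-!
The function `f z = p₀ z^{k+ℓ} - z^ℓ + (1 - p₀)` has derivative `z^{ℓ-1} (p₀ (k+ℓ) z^k - ℓ)`,
so on `[0, ∞)` it decreases up to the point `c` with `p₀ (k+ℓ) c^k = ℓ` and increases after it.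
The drift condition says `c < 1`. Since `f 0 = 1 - p₀ > 0` and `f 1 = 0`, the root at `1` is the
only zero on `(c, 1]`, and `f` has exactly one further zero, in `(0, c)`.
-/

open Set

lemma existsUnique_zero_of_strictAntiOn_of_strictMonoOn {f : ℝ → ℝ} {a b c : ℝ}
    (hac : a ≤ c) (hcb : c < b) (hcont : ContinuousOn f (Icc a c))
    (hanti : StrictAntiOn f (Icc a c)) (hmono : StrictMonoOn f (Icc c b))
    (ha : 0 < f a) (hb : f b = 0) :
    ∃! z, z ∈ Ioo a b ∧ f z = 0 := by
  have hc : f c < 0 := hb ▸ hmono (left_mem_Icc.2 hcb.le) (right_mem_Icc.2 hcb.le) hcb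
  obtain ⟨z, hz, hz0⟩ := intermediate_value_Ioo' hac hcont ⟨hc, ha⟩
  refine ⟨z, ⟨⟨hz.1, hz.2.trans hcb⟩, hz0⟩, ?_⟩
  rintro y ⟨hy, hy0⟩
  rcases le_or_gt y c with hyc | hcy
  · exact hanti.injOn ⟨hy.1.le, hyc⟩ (Ioo_subset_Icc_self hz) (hy0.trans hz0.symm)
  · have := hmono ⟨hcy.le, hy.2.le⟩ (right_mem_Icc.2 hcb.le) hy.2
    linarith

def charFn (p : ℝ) (k l : ℕ) (z : ℝ) : ℝ := p * z ^ (k + l) - z ^ l + (1 - p)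

section charFn

variable {p : ℝ} {k l : ℕ}

lemma hasDerivAt_charFn (hl : 1 ≤ l) (z : ℝ) :
    HasDerivAt (charFn p k l) (z ^ (l - 1) * (p * (k + l) * z ^ k - l)) z := by
  refine ((((hasDerivAt_pow (k + l) z).const_mul p).sub (hasDerivAt_pow l z)).add_const
    (1 - p)).congr_deriv ?_
  rw [show k + l - 1 = (l - 1) + k by omega, pow_add]
  push_cast
  ring

lemma strictAntiOn_charFn (hp : 0 < p) (hk : 1 ≤ k) (hl : 1 ≤ l) {c : ℝ}
    (hc : p * (k + l) * c ^ k = l) : StrictAntiOn (charFn p k l) (Icc 0 c) := by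
  refine strictAntiOn_of_deriv_neg (convex_Icc 0 c)
    (fun z _ ↦ (hasDerivAt_charFn hl z).continuousAt.continuousWithinAt) ?_
  intro z hz
  rw [interior_Icc] at hz
  obtain ⟨hz0, hzc⟩ := hz
  rw [(hasDerivAt_charFn hl z).deriv]
  have hzk : z ^ k < c ^ k := pow_lt_pow_left₀ hzc hz0.le (by omega)
  have hpkl : 0 < p * (k + l) := by positivity
  exact mul_neg_of_pos_of_neg (pow_pos hz0 _) (by nlinarith)

lemma strictMonoOn_charFn (hp : 0 < p) (hk : 1 ≤ k) (hl : 1 ≤ l) {c : ℝ} (hc0 : 0 < c)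
    (hc : p * (k + l) * c ^ k = l) : StrictMonoOn (charFn p k l) (Ici c) := by
  refine strictMonoOn_of_deriv_pos (convex_Ici c)
    (fun z _ ↦ (hasDerivAt_charFn hl z).continuousAt.continuousWithinAt) ?_
  intro z hz
  rw [interior_Ici] at hz
  rw [(hasDerivAt_charFn hl z).deriv]
  have hck : c ^ k < z ^ k := pow_lt_pow_left₀ hz hc0.le (by omega)
  have hpkl : 0 < p * (k + l) := by positivity
  exact mul_pos (pow_pos (hc0.trans hz) _) (by nlinarith)

end charFn

theorem stmt4_general (p0 : ℝ) (hp0 : p0 ∈ Set.Ioo (0 : ℝ) 1) (k l : ℕ) (hk : 1 ≤ k) (hl : 1 ≤ l)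
    (hdrift : (1 - p0) * l < p0 * k) :
    ∃! z : ℝ, z ∈ Set.Ioo (0 : ℝ) 1 ∧ p0 * z ^ (k + l) - z ^ l + (1 - p0) = 0 := by
  obtain ⟨hp0, hp1⟩ := hp0
  have hpkl : 0 < p0 * (k + l) := by positivity
  set A : ℝ := l / (p0 * (k + l))
  have hA0 : 0 < A := by positivity
  have hA1 : A < 1 := (div_lt_one hpkl).2 (by linarith)
  set c : ℝ := A ^ (k⁻¹ : ℝ)
  have hc0 : 0 < c := Real.rpow_pos_of_pos hA0 _
  have hck : c ^ k = A := Real.rpow_inv_natCast_pow hA0.le (by omega)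
  have hc1 : c < 1 := (pow_lt_one_iff_of_nonneg hc0.le (by omega)).1 (hck ▸ hA1)
  have hcrit : p0 * (k + l) * c ^ k = l := by rw [hck]; exact mul_div_cancel₀ _ hpkl.ne'
  refine existsUnique_zero_of_strictAntiOn_of_strictMonoOn (f := charFn p0 k l) hc0.le hc1
    (fun z _ ↦ (hasDerivAt_charFn hl z).continuousAt.continuousWithinAt)
    (strictAntiOn_charFn hp0 hk hl hcrit)
    ((strictMonoOn_charFn hp0 hk hl hc0 hcrit).mono Icc_subset_Ici_self) ?_ ?_
  · simp [charFn, zero_pow (show k + l ≠ 0 by omega), zero_pow (show l ≠ 0 by omega), hp1]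
  · simp [charFn]

/-- For `p₀ ∈ (0,1)`, coprime `k, ℓ ≥ 1` with positive drift `p₀ k > (1-p₀) ℓ`,
the equation `p₀ z^{k+ℓ} - z^ℓ + (1-p₀) = 0` has a unique real solution in `(0,1)`. -/
theorem stmt4 (p0 : ℝ) (hp0 : p0 ∈ Set.Ioo (0 : ℝ) 1) (k l : ℕ) (hk : 1 ≤ k) (hl : 1 ≤ l)
    (hco : Nat.Coprime k l) (hdrift : (1 - p0) * l < p0 * k) :
    ∃! z : ℝ, z ∈ Set.Ioo (0 : ℝ) 1 ∧ p0 * z ^ (k + l) - z ^ l + (1 - p0) = 0 :=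
  stmt4_general p0 hp0 k l hk hl hdrift
end

section
/- Let p_0 ∈ (0,1) with p_0 > ℓ/(k+ℓ), where k, ℓ ≥ 1 are relatively prime integers. Then z = 1 is the unique solution on the unit circle {z ∈ ℂ : |z| = 1} of the equation p_0 z^{k+ℓ} - z^ℓ + (1 - p_0) = 0, and it is a simple root. -/
/-! The equation says `z^ℓ = p₀ z^{k+ℓ} + (1 - p₀) · 1`, so the unit vector `z^ℓ` lies on the
segment between the unit vectors `z^{k+ℓ}` and `1`. Strict convexity of the disc forces
`z^{k+ℓ} = 1`, hence `z^ℓ = 1`, and coprimality of `k` and `ℓ` then gives `z = 1`. The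
derivative at `1` is `p₀(k+ℓ) - ℓ`, which is positive. -/

theorem eq_of_norm_combo_eq {E : Type*} [NormedAddCommGroup E] [NormedSpace ℝ E]
    [StrictConvexSpace ℝ E] {x y : E} {r a b : ℝ} (hx : ‖x‖ ≤ r) (hy : ‖y‖ ≤ r) (ha : 0 < a)
    (hb : 0 < b) (hab : a + b = 1) (h : ‖a • x + b • y‖ = r) : x = y := by
  by_contra hne
  exact (norm_combo_lt_of_ne hx hy hne ha hb hab).ne h

theorem eq_one_of_pow_add_eq_one {M : Type*} [Monoid M] {a : M} {k l : ℕ} (hco : k.Coprime l)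
    (hkl : a ^ (k + l) = 1) (hl : a ^ l = 1) : a = 1 := by
  have hk : a ^ k = 1 := by rwa [pow_add, hl, mul_one] at hkl
  simpa [hco.gcd_eq_one] using pow_gcd_eq_one.2 ⟨hk, hl⟩

theorem pow_eq_one_of_norm_eq_one_of_root {p : ℝ} (hp0 : 0 < p) (hp1 : p < 1) {m l : ℕ} {z : ℂ}
    (hz : ‖z‖ = 1) (h : (p : ℂ) * z ^ m - z ^ l + (1 - (p : ℂ)) = 0) :
    z ^ m = 1 ∧ z ^ l = 1 := by
  have hzl : z ^ l = p • z ^ m + (1 - p) • (1 : ℂ) := by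
    simp only [Complex.real_smul, Complex.ofReal_sub, Complex.ofReal_one, mul_one]
    linear_combination -h
  have hm : z ^ m = 1 :=
    eq_of_norm_combo_eq (r := 1) (by simp [hz]) (by simp) hp0 (sub_pos.2 hp1) (add_sub_cancel _ _)
      (by rw [← hzl, norm_pow, hz, one_pow])
  exact ⟨hm, by rw [hzl, hm, ← add_smul, add_sub_cancel, one_smul]⟩

theorem stmt5_general (p0 : ℝ) (k l : ℕ) (hl : 1 ≤ l) (hco : Nat.Coprime k l)
    (hp0 : (l : ℝ) / ((k : ℝ) + l) < p0) (hp1 : p0 < 1) :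
    (∀ z : ℂ, ‖z‖ = 1 →
        ((p0 : ℂ) * z ^ (k + l) - z ^ l + (1 - (p0 : ℂ)) = 0 ↔ z = 1)) ∧
      (p0 : ℂ) * ((k : ℂ) + l) * (1 : ℂ) ^ (k + l - 1) - (l : ℂ) * (1 : ℂ) ^ (l - 1) ≠ 0 := by
  have hkl : (0 : ℝ) < k + l := by norm_cast; omega
  have hp0pos : 0 < p0 := lt_of_le_of_lt (by positivity) hp0
  refine ⟨fun z hz => ⟨fun h => ?_, fun h => by rw [h]; ring⟩, ?_⟩
  · obtain ⟨hkl1, hl1⟩ := pow_eq_one_of_norm_eq_one_of_root hp0pos hp1 hz h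
    exact eq_one_of_pow_add_eq_one hco hkl1 hl1
  · have hlt : (l : ℝ) < p0 * (k + l) := (div_lt_iff₀ hkl).1 hp0
    rw [one_pow, one_pow, mul_one, mul_one, sub_ne_zero]
    exact_mod_cast hlt.ne'

/-- For `p₀ ∈ (ℓ/(k+ℓ),1)` with `k, ℓ ≥ 1` coprime, `z = 1` is the unique root of
`p₀ z^{k+ℓ} - z^ℓ + (1-p₀) = 0` on the unit circle, and it is a simple root
(the derivative `p₀(k+ℓ)z^{k+ℓ-1} - ℓ z^{ℓ-1}` does not vanish at `z = 1`). -/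
theorem stmt5 (p0 : ℝ) (k l : ℕ) (hk : 1 ≤ k) (hl : 1 ≤ l) (hco : Nat.Coprime k l)
    (hp0 : (l : ℝ) / ((k : ℝ) + l) < p0) (hp1 : p0 < 1) :
    (∀ z : ℂ, ‖z‖ = 1 →
        ((p0 : ℂ) * z ^ (k + l) - z ^ l + (1 - (p0 : ℂ)) = 0 ↔ z = 1)) ∧
      (p0 : ℂ) * ((k : ℂ) + l) * (1 : ℂ) ^ (k + l - 1) - (l : ℂ) * (1 : ℂ) ^ (l - 1) ≠ 0 :=
  stmt5_general p0 k l hl hco hp0 hp1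
end

section
/- Let p_0 ∈ (0,1) and k, ℓ ≥ 1 coprime integers with p_0 > ℓ/(k+ℓ), and let ν_1 ∈ (0,1) be the unique real root of p_0 z^{k+ℓ} - z^ℓ + (1-p_0) = 0 in (0,1). Then every other complex root w of p_0 z^{k+ℓ} - z^ℓ + (1-p_0) = 0 with |w| < 1 satisfies |w| < ν_1; that is, ν_1 is a simple root and is the root of strictly largest modulus among all roots inside the open unit disk. -/
/-!
Dividing the trinomial by `x ^ ℓ` gives `φ x = p₀ x ^ k - 1 + (1 - p₀) x ^ (-ℓ)`, which is
strictly convex on `(0, ∞)` and vanishes at `ν₁` and at `1`. Hence it is negative on `(ν₁, 1)`,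
and its derivative at `ν₁` is negative, which makes `ν₁` a simple root. A complex root `w` satisfies
`‖w‖ ^ ℓ ≤ p₀ ‖w‖ ^ (k + ℓ) + (1 - p₀)`, i.e. `φ ‖w‖ ≥ 0`, which rules out `ν₁ < ‖w‖ < 1`.
If `‖w‖ = ν₁`, this triangle inequality is an equality, so `p₀ w ^ (k + ℓ)` is a positive real:
then `w ^ (k + ℓ) = ν₁ ^ (k + ℓ)` and `w ^ ℓ = ν₁ ^ ℓ`, and as `k + ℓ` and `ℓ` are coprime,
`w = ν₁`.
-/

open Set Filter
open scoped ComplexOrder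

def trinomial {R : Type*} [CommRing R] (p : R) (k l : ℕ) (z : R) : R :=
  p * z ^ (k + l) - z ^ l + (1 - p)

noncomputable def normalizedTrinomial (p : ℝ) (k l : ℕ) (x : ℝ) : ℝ :=
  trinomial p k l x / x ^ l

theorem StrictConvexOn.const_mul {s : Set ℝ} {f : ℝ → ℝ} {c : ℝ} (hc : 0 < c)
    (hf : StrictConvexOn ℝ s f) : StrictConvexOn ℝ s fun x => c * f x :=
  ⟨hf.1, fun x hx y hy hxy a b ha hb hab => by
    simpa only [smul_eq_mul, mul_add, mul_left_comm c] using
      mul_lt_mul_of_pos_left (hf.2 hx hy hxy ha hb hab) hc⟩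

theorem eq_of_pow_eq_pow_of_coprime {K : Type*} [CommGroupWithZero K] {a b : K} {m n : ℕ}
    (hb : b ≠ 0) (hmn : m.Coprime n) (hm : a ^ m = b ^ m) (hn : a ^ n = b ^ n) : a = b := by
  have h : (a / b) ^ m.gcd n = 1 := pow_gcd_eq_one.2
    ⟨by rw [div_pow, hm, div_self (pow_ne_zero _ hb)],
      by rw [div_pow, hn, div_self (pow_ne_zero _ hb)]⟩
  rwa [hmn.gcd_eq_one, pow_one, div_eq_one_iff_eq hb] at h

theorem Complex.eq_norm_of_norm_add_ofReal {z : ℂ} {c : ℝ} (hc : 0 < c)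
    (h : ‖z + c‖ = ‖z‖ + c) : z = ‖z‖ := by
  have hz : 0 ≤ z := by
    rcases (norm_add_eq_iff (x := z) (y := c)).1 (by rwa [norm_real, Real.norm_of_nonneg hc.le])
      with hz | hc' | harg
    · exact hz.ge
    · exact absurd (ofReal_eq_zero.1 hc') hc.ne'
    · rwa [arg_ofReal_of_nonneg hc.le, arg_eq_zero_iff_zero_le] at harg
  rw [← re_eq_norm.2 hz]
  exact eq_re_of_ofReal_le (r := 0) (by simpa using hz)

section

variable {p : ℝ} {k l : ℕ}

theorem trinomial_eq_pow_mul_normalizedTrinomial {x : ℝ} (hx : x ≠ 0) :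
    trinomial p k l x = x ^ l * normalizedTrinomial p k l x :=
  (mul_div_cancel₀ _ (pow_ne_zero l hx)).symm

theorem strictConvexOn_normalizedTrinomial (hp₀ : 0 ≤ p) (hp₁ : p < 1) (hl : l ≠ 0) :
    StrictConvexOn ℝ (Ioi 0) (normalizedTrinomial p k l) := by
  have h : StrictConvexOn ℝ (Ioi 0) fun x : ℝ => p * x ^ k + ((1 - p) * x ^ (-(l : ℤ)) - 1) :=
    (((convexOn_pow k).subset Ioi_subset_Ici_self (convex_Ioi 0)).smul hp₀).add_strictConvexOn
      (((strictConvexOn_zpow (by omega) (by omega)).const_mul (sub_pos.2 hp₁)).add_const _)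
  refine h.congr fun x hx => ?_
  have hx : x ^ l ≠ 0 := pow_ne_zero l (ne_of_gt hx)
  simp only [normalizedTrinomial, trinomial, zpow_neg, zpow_natCast]
  field_simp
  ring

theorem normalizedTrinomial_one : normalizedTrinomial p k l 1 = 0 := by
  simp [normalizedTrinomial, trinomial]

theorem trinomial_neg_of_mem_Ioo (hp₀ : 0 ≤ p) (hp₁ : p < 1) (hl : l ≠ 0) {ν r : ℝ} (hν : 0 < ν)
    (hroot : trinomial p k l ν = 0) (hr : r ∈ Ioo ν 1) : trinomial p k l r < 0 := by
  have hν₀ : normalizedTrinomial p k l ν = 0 := by simp [normalizedTrinomial, hroot]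
  have hr₀ : normalizedTrinomial p k l r < 0 := by
    simpa [hν₀, normalizedTrinomial_one] using
      (strictConvexOn_normalizedTrinomial (k := k) hp₀ hp₁ hl).lt_on_openSegment (mem_Ioi.2 hν)
        (mem_Ioi.2 one_pos) (hr.1.trans hr.2).ne (Ioo_subset_openSegment hr)
  rw [trinomial_eq_pow_mul_normalizedTrinomial (hν.trans hr.1).ne']
  exact mul_neg_of_pos_of_neg (pow_pos (hν.trans hr.1) l) hr₀

theorem hasDerivAt_trinomial (p : ℝ) (k l : ℕ) (x : ℝ) :
    HasDerivAt (trinomial p k l) (p * ((k : ℝ) + l) * x ^ (k + l - 1) - l * x ^ (l - 1)) x := by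
  refine ((((hasDerivAt_pow (k + l) x).const_mul p).sub (hasDerivAt_pow l x)).add_const
    (1 - p)).congr_deriv ?_
  push_cast
  ring

theorem trinomial_deriv_neg (hp₀ : 0 ≤ p) (hp₁ : p < 1) (hl : l ≠ 0) {ν : ℝ} (hν : ν ∈ Ioo 0 1)
    (hroot : trinomial p k l ν = 0) :
    p * ((k : ℝ) + l) * ν ^ (k + l - 1) - l * ν ^ (l - 1) < 0 := by
  set φ := normalizedTrinomial p k l
  have hφd : DifferentiableAt ℝ φ ν :=
    (hasDerivAt_trinomial p k l ν).differentiableAt.div (differentiableAt_pow l)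
      (pow_ne_zero l hν.1.ne')
  have hφν : φ ν = 0 := by simp [φ, normalizedTrinomial, hroot]
  have hφ' : deriv φ ν < 0 := by
    simpa [slope_def_field, hφν, φ, normalizedTrinomial_one] using
      (strictConvexOn_normalizedTrinomial hp₀ hp₁ hl).deriv_lt_slope hν.1 (mem_Ioi.2 one_pos) hν.2
        hφd
  have hprod : HasDerivAt (trinomial p k l) (l * ν ^ (l - 1) * φ ν + ν ^ l * deriv φ ν) ν :=
    ((hasDerivAt_pow l ν).mul hφd.hasDerivAt).congr_of_eventuallyEq <|
      eventually_of_mem (Ioi_mem_nhds hν.1) fun x hx =>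
        trinomial_eq_pow_mul_normalizedTrinomial (ne_of_gt hx)
  rw [(hasDerivAt_trinomial p k l ν).unique hprod, hφν, mul_zero, zero_add]
  exact mul_neg_of_pos_of_neg (pow_pos hν.1 l) hφ'

theorem pow_eq_of_trinomial_eq_zero {w : ℂ} (hw : trinomial (p : ℂ) k l w = 0) :
    w ^ l = p * w ^ (k + l) + ((1 - p : ℝ) : ℂ) := by
  simp only [trinomial] at hw
  push_cast
  linear_combination -hw

theorem trinomial_norm_nonneg (hp₀ : 0 ≤ p) (hp₁ : p ≤ 1) {w : ℂ}
    (hw : trinomial (p : ℂ) k l w = 0) : 0 ≤ trinomial p k l ‖w‖ := by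
  have hwl := pow_eq_of_trinomial_eq_zero hw
  have h := norm_add_le ((p : ℂ) * w ^ (k + l)) ((1 - p : ℝ) : ℂ)
  rw [← hwl, norm_pow, norm_mul, norm_pow, Complex.norm_real, Complex.norm_real,
    Real.norm_of_nonneg hp₀, Real.norm_of_nonneg (sub_nonneg.2 hp₁)] at h
  simp only [trinomial]
  linarith

theorem eq_of_trinomial_eq_zero_of_norm_eq (hp₀ : 0 < p) (hp₁ : p < 1) (hkl : k.Coprime l)
    {ν : ℝ} (hν : 0 < ν) (hroot : trinomial p k l ν = 0) {w : ℂ}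
    (hw : trinomial (p : ℂ) k l w = 0) (hwν : ‖w‖ = ν) : w = ν := by
  have hwl := pow_eq_of_trinomial_eq_zero hw
  have hνl : ν ^ l = p * ν ^ (k + l) + (1 - p) := by
    simp only [trinomial] at hroot
    linarith
  have hnorm : ‖(p : ℂ) * w ^ (k + l)‖ = p * ν ^ (k + l) := by
    rw [norm_mul, norm_pow, Complex.norm_real, Real.norm_of_nonneg hp₀.le, hwν]
  have hkl' : w ^ (k + l) = (ν : ℂ) ^ (k + l) := by
    have h := Complex.eq_norm_of_norm_add_ofReal (sub_pos.2 hp₁)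
      (by rw [← hwl, hnorm, norm_pow, hwν, hνl])
    rw [hnorm] at h
    push_cast at h
    exact mul_left_cancel₀ (Complex.ofReal_ne_zero.2 hp₀.ne') h
  have hl' : w ^ l = (ν : ℂ) ^ l := by
    rw [hwl, hkl']
    exact_mod_cast hνl.symm
  exact eq_of_pow_eq_pow_of_coprime (Complex.ofReal_ne_zero.2 hν.ne')
    (Nat.coprime_add_self_left.2 hkl) hkl' hl'

end

theorem stmt17_general (p0 : ℝ) (k l : ℕ) (hl : 1 ≤ l) (hco : Nat.Coprime k l)
    (hp0 : (l : ℝ) / ((k : ℝ) + l) < p0) (hp1 : p0 < 1)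
    (ν1 : ℝ) (hν1 : ν1 ∈ Set.Ioo (0 : ℝ) 1)
    (hroot : p0 * ν1 ^ (k + l) - ν1 ^ l + (1 - p0) = 0) :
    (∀ w : ℂ, ‖w‖ < 1 →
        (p0 : ℂ) * w ^ (k + l) - w ^ l + (1 - (p0 : ℂ)) = 0 → w ≠ (ν1 : ℂ) →
          ‖w‖ < ν1) ∧
      p0 * ((k : ℝ) + l) * ν1 ^ (k + l - 1) - (l : ℝ) * ν1 ^ (l - 1) ≠ 0 := by
  have hp0' : 0 < p0 := (div_nonneg (Nat.cast_nonneg l) (by positivity)).trans_lt hp0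
  have hl0 : l ≠ 0 := by omega
  refine ⟨fun w hw1 hw hwν => ?_, (trinomial_deriv_neg hp0'.le hp1 hl0 hν1 hroot).ne⟩
  by_contra! hνw
  rcases hνw.eq_or_lt with hνw | hνw
  · exact hwν (eq_of_trinomial_eq_zero_of_norm_eq hp0' hp1 hco hν1.1 hroot hw hνw.symm)
  · exact (trinomial_norm_nonneg hp0'.le hp1.le hw).not_gt
      (trinomial_neg_of_mem_Ioo hp0'.le hp1 hl0 hν1.1 hroot ⟨hνw, hw1⟩)

/-- The root `ν₁ ∈ (0,1)` of `p₀z^{k+ℓ} - z^ℓ + (1-p₀) = 0` is simple and has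
strictly largest modulus among all complex roots in the open unit disk. -/
theorem stmt17 (p0 : ℝ) (k l : ℕ) (hk : 1 ≤ k) (hl : 1 ≤ l) (hco : Nat.Coprime k l)
    (hp0 : (l : ℝ) / ((k : ℝ) + l) < p0) (hp1 : p0 < 1)
    (ν1 : ℝ) (hν1 : ν1 ∈ Set.Ioo (0 : ℝ) 1)
    (hroot : p0 * ν1 ^ (k + l) - ν1 ^ l + (1 - p0) = 0) :
    (∀ w : ℂ, ‖w‖ < 1 →
        (p0 : ℂ) * w ^ (k + l) - w ^ l + (1 - (p0 : ℂ)) = 0 → w ≠ (ν1 : ℂ) →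
          ‖w‖ < ν1) ∧
      p0 * ((k : ℝ) + l) * ν1 ^ (k + l - 1) - (l : ℝ) * ν1 ^ (l - 1) ≠ 0 :=
  stmt17_general p0 k l hl hco hp0 hp1 ν1 hν1 hroot
end
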